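/- In a heavy-tailed linear SCM with positive coefficients, the tail of each variable satisfies P(X_j > x) ~ (Σ_{h ∈ An(j,G)} β_{h→j}^α) ℓ(x) x^{-α} as x → ∞. -/

import Mathlib

open MeasureTheory ProbabilityTheory Filter Topology

/-- `f ~ g` at infinity: the ratio tends to 1. -/
def Asymp (f g : ℝ → ℝ) : Prop := Tendsto (fun x => f x / g x) atTop (𝓝 1)

/-- A slowly varying function: eventually positive and `ℓ(cx)/ℓ(x) → 1` for all `c > 0`. -/
def SlowlyVarying (ℓ : ℝ → ℝ) : Prop :=
  (∀ᶠ x in atTop, 0 < ℓ x) ∧ ∀ c > 0, Tendsto (fun x => ℓ (c * x) / ℓ x) atTop (𝓝 1)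

/-- The (real-valued) upper tail probability function of `Y` under `μ`. -/
noncomputable def tailP {Ω : Type*} [MeasurableSpace Ω] (μ : Measure Ω) (Y : Ω → ℝ) (x : ℝ) : ℝ :=
  (μ {ω | x < Y ω}).toReal

/-- The distribution function of a real random variable `Y` under `μ`. -/
noncomputable def cdf' {Ω : Type*} [MeasurableSpace Ω] (μ : Measure Ω) (Y : Ω → ℝ) (x : ℝ) : ℝ :=
  (μ {ω | Y ω ≤ x}).toReal

/-!
With `g x = ℓ x * x ^ (-α)`, the function `g` is regularly varying of index `-α`, so
`P(c ε > x) / g x → c ^ α` for `c > 0`. For independent `X`, `Y` with `P(X > x) / g x → a` and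
`P(Y > x) / g x → b`, a sum exceeds `x` essentially only through one large summand:
`X + Y > x` forces `X > (1 - δ) x`, `Y > (1 - δ) x`, or both `X, Y > δ x`, the last event having
probability `o(g x)`; conversely `X > (1 + δ) x` together with `Y > -δ x` already gives
`X + Y > x`. Letting `δ → 0` yields `P(X + Y > x) / g x → a + b`, and induction over the
ancestors of `j` gives the limit `∑ h, β_{h→j} ^ α`.
-/

section Tail

variable {Ω : Type*} [MeasurableSpace Ω] {μ : Measure Ω} {X Y : Ω → ℝ}

lemma tailP_eq_measureReal (x : ℝ) : tailP μ Y x = μ.real {ω | x < Y ω} := rfl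

lemma tailP_const_mul {c : ℝ} (hc : 0 < c) (x : ℝ) :
    tailP μ (fun ω => c * X ω) x = tailP μ X (c⁻¹ * x) := by
  simp only [tailP, inv_mul_lt_iff₀ hc]

lemma ProbabilityTheory.IndepFun.measureReal_inter_tail (hXY : IndepFun X Y μ) (s t : ℝ) :
    μ.real ({ω | s < X ω} ∩ {ω | t < Y ω}) = tailP μ X s * tailP μ Y t := by
  rw [tailP, tailP, measureReal_def, ← ENNReal.toReal_mul]
  exact congrArg ENNReal.toReal
    (hXY.measure_inter_preimage_eq_mul _ _ measurableSet_Ioi measurableSet_Ioi)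

lemma ProbabilityTheory.IndepFun.tailP_add_le [IsFiniteMeasure μ] (hXY : IndepFun X Y μ)
    (x δ : ℝ) :
    tailP μ (fun ω => X ω + Y ω) x ≤ tailP μ X ((1 - δ) * x) + tailP μ Y ((1 - δ) * x) +
      tailP μ X (δ * x) * tailP μ Y (δ * x) := by
  have hcover : {ω | x < X ω + Y ω} ⊆ {ω | (1 - δ) * x < X ω} ∪ {ω | (1 - δ) * x < Y ω} ∪
      ({ω | δ * x < X ω} ∩ {ω | δ * x < Y ω}) := by
    intro ω (hω : x < X ω + Y ω)
    by_cases hX : (1 - δ) * x < X ω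
    · exact Or.inl (Or.inl hX)
    by_cases hY : (1 - δ) * x < Y ω
    · exact Or.inl (Or.inr hY)
    exact Or.inr ⟨show δ * x < X ω by linarith, show δ * x < Y ω by linarith⟩
  rw [← hXY.measureReal_inter_tail]
  calc μ.real {ω | x < X ω + Y ω}
      ≤ μ.real ({ω | (1 - δ) * x < X ω} ∪ {ω | (1 - δ) * x < Y ω} ∪
          ({ω | δ * x < X ω} ∩ {ω | δ * x < Y ω})) := measureReal_mono hcover
    _ ≤ _ := (measureReal_union_le _ _).trans (add_le_add_left (measureReal_union_le _ _) _)

lemma ProbabilityTheory.IndepFun.le_tailP_add [IsFiniteMeasure μ] (hX : Measurable X)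
    (hY : Measurable Y) (hXY : IndepFun X Y μ) (x δ : ℝ) :
    tailP μ X ((1 + δ) * x) * tailP μ Y (-(δ * x)) +
        tailP μ Y ((1 + δ) * x) * tailP μ X (-(δ * x)) -
        tailP μ X ((1 + δ) * x) * tailP μ Y ((1 + δ) * x) ≤
      tailP μ (fun ω => X ω + Y ω) x := by
  set A := {ω | (1 + δ) * x < X ω} ∩ {ω | -(δ * x) < Y ω}
  set B := {ω | -(δ * x) < X ω} ∩ {ω | (1 + δ) * x < Y ω}
  have hAB : A ∪ B ⊆ {ω | x < X ω + Y ω} := by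
    rintro ω (⟨h₁, h₂⟩ | ⟨h₁, h₂⟩) <;>
    · simp only [Set.mem_ofPred_eq] at h₁ h₂ ⊢
      linarith
  have hAiB : A ∩ B ⊆ {ω | (1 + δ) * x < X ω} ∩ {ω | (1 + δ) * x < Y ω} :=
    fun ω ⟨⟨h₁, _⟩, ⟨_, h₂⟩⟩ => ⟨h₁, h₂⟩
  have hA : MeasurableSet A :=
    (measurableSet_lt measurable_const hX).inter (measurableSet_lt measurable_const hY)
  have hincl_excl := measureReal_union_add_inter' (μ := μ) hA (t := B)
  rw [hXY.measureReal_inter_tail, hXY.measureReal_inter_tail] at hincl_excl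
  rw [tailP_eq_measureReal (Y := fun ω => X ω + Y ω)]
  linarith [measureReal_mono (μ := μ) hAB, measureReal_mono (μ := μ) hAiB,
    hXY.measureReal_inter_tail ((1 + δ) * x) ((1 + δ) * x)]

variable [IsProbabilityMeasure μ]

lemma tailP_eq_one_sub_cdf (hY : Measurable Y) (x : ℝ) :
    tailP μ Y x = 1 - cdf (μ.map Y) x := by
  have := Measure.isProbabilityMeasure_map (μ := μ) hY.aemeasurable
  rw [cdf_eq_real, ← probReal_compl_eq_one_sub measurableSet_Iic, Set.compl_Iic,
    measureReal_def, Measure.map_apply hY measurableSet_Ioi]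
  rfl

lemma tendsto_tailP_atTop (hY : Measurable Y) : Tendsto (tailP μ Y) atTop (𝓝 0) := by
  rw [funext (tailP_eq_one_sub_cdf hY)]
  simpa using (tendsto_cdf_atTop _).const_sub 1

lemma tendsto_tailP_atBot (hY : Measurable Y) : Tendsto (tailP μ Y) atBot (𝓝 1) := by
  rw [funext (tailP_eq_one_sub_cdf hY)]
  simpa using (tendsto_cdf_atBot _).const_sub 1

end Tail

lemma tendsto_of_forall_eventually_bounds {ι α β : Type*} [TopologicalSpace β] [LinearOrder β]
    [OrderTopology β] {p : Filter ι} [p.NeBot] {l : Filter α} {f : α → β} {L : β}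
    {lo up : ι → β} (hlo : Tendsto lo p (𝓝 L)) (hup : Tendsto up p (𝓝 L))
    (hbounds : ∀ᶠ δ in p,
      (∀ c < lo δ, ∀ᶠ x in l, c < f x) ∧ ∀ c > up δ, ∀ᶠ x in l, f x < c) :
    Tendsto f l (𝓝 L) := by
  rw [tendsto_order]
  refine ⟨fun c hc => ?_, fun c hc => ?_⟩
  · obtain ⟨δ, hδ, hcδ⟩ := (hbounds.and (hlo.eventually_const_lt hc)).exists
    exact hδ.1 c hcδ
  · obtain ⟨δ, hδ, hδc⟩ := (hbounds.and (hup.eventually_lt_const hc)).exists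
    exact hδ.2 c hδc

def RegularlyVarying (g : ℝ → ℝ) (ρ : ℝ) : Prop :=
  (∀ᶠ x in atTop, 0 < g x) ∧ ∀ c > 0, Tendsto (fun x => g (c * x) / g x) atTop (𝓝 (c ^ ρ))

lemma SlowlyVarying.regularlyVarying_mul_rpow {ℓ : ℝ → ℝ} (hℓ : SlowlyVarying ℓ) (ρ : ℝ) :
    RegularlyVarying (fun x => ℓ x * x ^ ρ) ρ := by
  refine ⟨?_, fun c hc => ?_⟩
  · filter_upwards [hℓ.1, eventually_gt_atTop 0] with x hℓx hx
    exact mul_pos hℓx (Real.rpow_pos_of_pos hx ρ)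
  · have hlim : Tendsto (fun x => ℓ (c * x) / ℓ x * c ^ ρ) atTop (𝓝 (c ^ ρ)) := by
      simpa using (hℓ.2 c hc).mul_const (c ^ ρ)
    refine hlim.congr' ?_
    filter_upwards [hℓ.1, eventually_gt_atTop 0] with x hℓx hx
    rw [Real.mul_rpow hc.le hx.le]
    field_simp [(Real.rpow_pos_of_pos hx ρ).ne']

lemma asymp_const_mul_of_tendsto_div {f g : ℝ → ℝ} {a : ℝ}
    (h : Tendsto (fun x => f x / g x) atTop (𝓝 a)) (ha : a ≠ 0) :
    Asymp f (fun x => a * g x) := by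
  simpa only [Asymp, div_mul_eq_div_div_swap, div_self ha] using h.div_const a

namespace RegularlyVarying

variable {g : ℝ → ℝ} {ρ : ℝ}

lemma tendsto_comp_mul_div (hg : RegularlyVarying g ρ) {f : ℝ → ℝ} {a : ℝ}
    (hf : Tendsto (fun x => f x / g x) atTop (𝓝 a)) {c : ℝ} (hc : 0 < c) :
    Tendsto (fun x => f (c * x) / g x) atTop (𝓝 (a * c ^ ρ)) := by
  have hcx : Tendsto (fun x => c * x) atTop atTop := tendsto_id.const_mul_atTop hc
  refine ((hf.comp hcx).mul (hg.2 c hc)).congr' ?_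
  filter_upwards [hcx.eventually hg.1] with x hgcx
  simp only [Function.comp_apply]
  field_simp [hgcx.ne']

variable {Ω : Type*} [MeasurableSpace Ω] {μ : Measure Ω}

lemma tendsto_tailP_const_mul_div (hg : RegularlyVarying g ρ) {X : Ω → ℝ} {a : ℝ}
    (hX : Tendsto (fun x => tailP μ X x / g x) atTop (𝓝 a)) {c : ℝ} (hc : 0 < c) :
    Tendsto (fun x => tailP μ (fun ω => c * X ω) x / g x) atTop (𝓝 (a * c ^ (-ρ))) := by
  simp_rw [tailP_const_mul hc]
  simpa only [Real.inv_rpow hc.le, Real.rpow_neg hc.le] using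
    hg.tendsto_comp_mul_div hX (inv_pos.2 hc)

variable [IsProbabilityMeasure μ] {X Y : Ω → ℝ} {a b δ : ℝ}

lemma eventually_lt_tailP_add_div (hg : RegularlyVarying g ρ) (hXm : Measurable X)
    (hYm : Measurable Y) (hXY : IndepFun X Y μ)
    (hX : Tendsto (fun x => tailP μ X x / g x) atTop (𝓝 a))
    (hY : Tendsto (fun x => tailP μ Y x / g x) atTop (𝓝 b)) (hδ : 0 < δ) :
    ∀ c < (a + b) * (1 + δ) ^ ρ, ∀ᶠ x in atTop, c < tailP μ (fun ω => X ω + Y ω) x / g x := by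
  intro c hc
  have hδx : Tendsto (fun x => -(δ * x)) atTop atBot :=
    tendsto_neg_atTop_atBot.comp (tendsto_id.const_mul_atTop hδ)
  have hXl := hg.tendsto_comp_mul_div hX (show 0 < 1 + δ by linarith)
  have hYl := hg.tendsto_comp_mul_div hY (show 0 < 1 + δ by linarith)
  have hX0 : Tendsto (fun x => tailP μ X ((1 + δ) * x)) atTop (𝓝 0) :=
    (tendsto_tailP_atTop (μ := μ) hXm).comp (tendsto_id.const_mul_atTop (by linarith))
  have hlim := ((hXl.mul ((tendsto_tailP_atBot (μ := μ) hYm).comp hδx)).add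
    (hYl.mul ((tendsto_tailP_atBot (μ := μ) hXm).comp hδx))).sub (hX0.mul hYl)
  rw [show a * (1 + δ) ^ ρ * 1 + b * (1 + δ) ^ ρ * 1 - 0 * (b * (1 + δ) ^ ρ) =
    (a + b) * (1 + δ) ^ ρ by ring] at hlim
  filter_upwards [hlim.eventually_const_lt hc, hg.1] with x hcx hgx
  calc c < _ := hcx
    _ = (tailP μ X ((1 + δ) * x) * tailP μ Y (-(δ * x)) +
          tailP μ Y ((1 + δ) * x) * tailP μ X (-(δ * x)) -
          tailP μ X ((1 + δ) * x) * tailP μ Y ((1 + δ) * x)) / g x := by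
      simp only [Function.comp_apply]
      ring
    _ ≤ _ := div_le_div_of_nonneg_right (hXY.le_tailP_add hXm hYm x δ) hgx.le

lemma eventually_tailP_add_div_lt (hg : RegularlyVarying g ρ) (hXm : Measurable X)
    (hXY : IndepFun X Y μ)
    (hX : Tendsto (fun x => tailP μ X x / g x) atTop (𝓝 a))
    (hY : Tendsto (fun x => tailP μ Y x / g x) atTop (𝓝 b)) (hδ₀ : 0 < δ) (hδ₁ : δ < 1) :
    ∀ c > (a + b) * (1 - δ) ^ ρ, ∀ᶠ x in atTop, tailP μ (fun ω => X ω + Y ω) x / g x < c := by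
  intro c hc
  have hX0 : Tendsto (fun x => tailP μ X (δ * x)) atTop (𝓝 0) :=
    (tendsto_tailP_atTop (μ := μ) hXm).comp (tendsto_id.const_mul_atTop hδ₀)
  have hlim := ((hg.tendsto_comp_mul_div hX (show 0 < 1 - δ by linarith)).add
    (hg.tendsto_comp_mul_div hY (show 0 < 1 - δ by linarith))).add
    (hX0.mul (hg.tendsto_comp_mul_div hY hδ₀))
  rw [show a * (1 - δ) ^ ρ + b * (1 - δ) ^ ρ + 0 * (b * δ ^ ρ) = (a + b) * (1 - δ) ^ ρ by ring]
    at hlim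
  filter_upwards [hlim.eventually_lt_const hc, hg.1] with x hxc hgx
  calc _ ≤ (tailP μ X ((1 - δ) * x) + tailP μ Y ((1 - δ) * x) +
        tailP μ X (δ * x) * tailP μ Y (δ * x)) / g x :=
      div_le_div_of_nonneg_right (hXY.tailP_add_le x δ) hgx.le
    _ = _ := by ring
    _ < c := hxc

lemma tendsto_tailP_add_div (hg : RegularlyVarying g ρ) (hXm : Measurable X)
    (hYm : Measurable Y) (hXY : IndepFun X Y μ)
    (hX : Tendsto (fun x => tailP μ X x / g x) atTop (𝓝 a))
    (hY : Tendsto (fun x => tailP μ Y x / g x) atTop (𝓝 b)) :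
    Tendsto (fun x => tailP μ (fun ω => X ω + Y ω) x / g x) atTop (𝓝 (a + b)) := by
  have hpow : ∀ t : ℝ → ℝ, Continuous t → t 0 = 1 →
      Tendsto (fun δ => (a + b) * t δ ^ ρ) (𝓝[>] 0) (𝓝 (a + b)) := fun t ht ht0 => by
    have hcont : ContinuousAt (fun t : ℝ => (a + b) * t ^ ρ) (t 0) := by
      rw [ht0]
      exact (Real.continuousAt_rpow_const 1 ρ (Or.inl one_ne_zero)).const_mul _
    simpa [ht0, Function.comp_def] using
      (hcont.tendsto.comp (ht.tendsto 0)).mono_left nhdsWithin_le_nhds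
  refine tendsto_of_forall_eventually_bounds (hpow (fun δ => 1 + δ) (by fun_prop) (by simp))
    (hpow (fun δ => 1 - δ) (by fun_prop) (by simp)) ?_
  filter_upwards [Ioo_mem_nhdsGT one_pos] with δ ⟨hδ₀, hδ₁⟩
  exact ⟨hg.eventually_lt_tailP_add_div hXm hYm hXY hX hY hδ₀,
    hg.eventually_tailP_add_div_lt hXm hXY hX hY hδ₀ hδ₁⟩

lemma tendsto_tailP_sum_div {ι : Type*} (hg : RegularlyVarying g ρ) {ε : ι → Ω → ℝ}
    (hεm : ∀ i, Measurable (ε i)) (hε : iIndepFun ε μ) {a : ι → ℝ}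
    (hεg : ∀ i, Tendsto (fun x => tailP μ (ε i) x / g x) atTop (𝓝 (a i)))
    {c : ι → ℝ} (s : Finset ι) (hc : ∀ i ∈ s, 0 < c i) :
    Tendsto (fun x => tailP μ (fun ω => ∑ i ∈ s, c i * ε i ω) x / g x) atTop
      (𝓝 (∑ i ∈ s, a i * c i ^ (-ρ))) := by
  induction s using Finset.cons_induction with
  | empty =>
    refine tendsto_const_nhds.congr' ?_
    filter_upwards [eventually_ge_atTop 0] with x hx
    simp [tailP, hx.not_gt]
  | cons i s hi ih =>
    have hcε : ∀ j, Measurable fun ω => c j * ε j ω := fun j => (hεm j).const_mul (c j)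
    have hindep : IndepFun (fun ω => c i * ε i ω) (fun ω => ∑ j ∈ s, c j * ε j ω) μ := by
      have := (hε.comp (fun j y => c j * y) fun j => measurable_const_mul (c j)
        ).indepFun_finsetSum_of_notMem hcε hi
      rw [Finset.sum_fn] at this
      exact this.symm
    simp only [Finset.sum_cons]
    exact hg.tendsto_tailP_add_div (hcε i) (Finset.measurable_sum s fun j _ => hcε j) hindep
      (hg.tendsto_tailP_const_mul_div (hεg i) (hc i (Finset.mem_cons_self i s)))
      (ih fun j hj => hc j (Finset.mem_cons_of_mem hj))

end RegularlyVarying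

theorem scm_variable_tail_general
    {V : Type*}
    -- the ancestor sets of the DAG (`An j` contains `j` itself)
    (An : V → Finset V) (hAself : ∀ j, j ∈ An j)
    -- the path coefficients: `B h j` is the sum of weighted directed paths from `h` to `j`
    (B : V → V → ℝ) (hBpos : ∀ j, ∀ h ∈ An j, 0 < B h j)
    -- the probability space and the independent regularly varying noise variables
    {Ω : Type*} [MeasurableSpace Ω] (μ : Measure Ω) [IsProbabilityMeasure μ]
    (ε : V → Ω → ℝ) (hmeas : ∀ j, Measurable (ε j))
    (hindep : iIndepFun ε μ)
    (α : ℝ) (ℓ : ℝ → ℝ) (hℓ : SlowlyVarying ℓ)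
    (htail : ∀ j, Asymp (tailP μ (ε j)) (fun x => ℓ x * x ^ (-α)))
    -- the variables of the SCM, written as weighted sums of ancestral noises
    (X : V → Ω → ℝ) (hX : ∀ j ω, X j ω = ∑ h ∈ An j, B h j * ε h ω)
    (j : V) :
    Asymp (tailP μ (X j)) (fun x => (∑ h ∈ An j, B h j ^ α) * ℓ x * x ^ (-α)) := by
  have hsum := (hℓ.regularlyVarying_mul_rpow (-α)).tendsto_tailP_sum_div hmeas hindep htail
    (An j) (hBpos j)
  simp only [one_mul, neg_neg] at hsum
  have hpos : 0 < ∑ h ∈ An j, B h j ^ α :=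
    Finset.sum_pos (fun h hh => Real.rpow_pos_of_pos (hBpos j h hh) α) ⟨j, hAself j⟩
  rw [funext (hX j)]
  simpa only [mul_assoc] using asymp_const_mul_of_tendsto_div hsum hpos.ne'

theorem scm_variable_tail
    {V : Type*} [Fintype V] [DecidableEq V]
    -- the ancestor sets of the DAG (`An j` contains `j` itself)
    (An : V → Finset V) (hAself : ∀ j, j ∈ An j)
    (hATrans : ∀ j, ∀ h ∈ An j, An h ⊆ An j)
    (hAAcyclic : ∀ j h, h ∈ An j → j ∈ An h → h = j)
    -- the path coefficients: `B h j` is the sum of weighted directed paths from `h` to `j`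
    (B : V → V → ℝ) (hBpos : ∀ j, ∀ h ∈ An j, 0 < B h j) (hBself : ∀ j, B j j = 1)
    -- the probability space and the independent regularly varying noise variables
    {Ω : Type*} [MeasurableSpace Ω] (μ : Measure Ω) [IsProbabilityMeasure μ]
    (ε : V → Ω → ℝ) (hmeas : ∀ j, Measurable (ε j))
    (hindep : iIndepFun ε μ)
    (α : ℝ) (hα : 0 < α) (ℓ : ℝ → ℝ) (hℓ : SlowlyVarying ℓ)
    (htail : ∀ j, Asymp (tailP μ (ε j)) (fun x => ℓ x * x ^ (-α)))
    -- the variables of the SCM, written as weighted sums of ancestral noises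
    (X : V → Ω → ℝ) (hX : ∀ j ω, X j ω = ∑ h ∈ An j, B h j * ε h ω)
    (j : V) :
    Asymp (tailP μ (X j)) (fun x => (∑ h ∈ An j, B h j ^ α) * ℓ x * x ^ (-α)) :=
  scm_variable_tail_general An hAself B hBpos μ ε hmeas hindep α ℓ hℓ htail X hX j
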